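/- arXiv:1401.1969 — 2 statements merged into one kernel-verified Lean document; each statement's English description precedes it below -/
import Mathlib

section
/- With W, b_n, L_m as above, the Virasoro commutation relation holds with central charge 1: for all integers l, m, [L_l, L_m] = (l − m)·L_{l+m} + ((l³ − l)/12)·δ_{l+m,0}·id_W. -/
open MvPolynomial

/-- The bosonic Fock space ℂ[x₁, x₂, …]. -/
noncomputable abbrev BosonFock : Type := MvPolynomial ℕ ℂ

/-- The boson modes: for `n < 0`, multiplication by `x_{|n|}`; for `n > 0` the derivation
with `b_n(x_m) = n·δ_{n,m}`; `b_0 = 0`. -/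
noncomputable def bop (n : ℤ) : Module.End ℂ BosonFock :=
  if n < 0 then LinearMap.mulLeft ℂ (X n.natAbs)
  else (n : ℂ) • (pderiv n.toNat).toLinearMap

/-- Normal ordering `:b_a b_c:`: the annihilation operator (larger index) to the right. -/
noncomputable def nord (a c : ℤ) : Module.End ℂ BosonFock :=
  if a ≤ c then bop a * bop c else bop c * bop a

/-- The Virasoro operator `L_m = (1/2)·Σ_{k∈ℤ} :b_{m−k} b_k:`, defined pointwise. -/
noncomputable def Lop (m : ℤ) (p : BosonFock) : BosonFock :=
  (1 / 2 : ℂ) • ∑ᶠ k : ℤ, nord (m - k) k p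

lemma pderiv_comm' (i j : ℕ) (p : BosonFock) :
    pderiv i (pderiv j p) = pderiv j (pderiv i p) := by
  induction p using MvPolynomial.induction_on with
  | C a => simp
  | add p q hp hq => simp [hp, hq]
  | mul_X p n ih => simp [pderiv_mul, ih, Pi.single_apply]; split_ifs <;> (try simp) <;> ring

lemma bop_neg_apply {a : ℤ} (h : a < 0) (p : BosonFock) :
    bop a p = X a.natAbs * p := by
  simp [bop, if_pos h]

lemma bop_nonneg_apply {a : ℤ} (h : ¬ a < 0) (p : BosonFock) :
    bop a p = (a : ℂ) • pderiv a.toNat p := by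
  simp [bop, if_neg h]

lemma bop_zero : bop 0 = 0 := by
  refine LinearMap.ext fun p => ?_; simp [bop]

/-- `p` has all its variables `< N`. -/
def VB (N : ℕ) (p : BosonFock) : Prop := ∀ n : ℕ, N ≤ n → pderiv n p = 0

lemma vb_zero (N : ℕ) : VB N (0 : BosonFock) := fun n _ => by simp

lemma vb_mono {N M : ℕ} {p : BosonFock} (h : VB N p) (hm : N ≤ M) : VB M p :=
  fun n hn => h n (hm.trans hn)

lemma vb_exists (p : BosonFock) : ∃ N : ℕ, 1 ≤ N ∧ VB N p := by
  refine ⟨p.vars.sup id + 1, by omega, fun n hn => ?_⟩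
  apply pderiv_eq_zero_of_notMem_vars
  intro hmem
  have := Finset.le_sup (f := id) hmem
  simp only [id] at this; omega

lemma vb_smul {N : ℕ} {p : BosonFock} (c : ℂ) (h : VB N p) : VB N (c • p) :=
  fun n hn => by rw [Derivation.map_smul, h n hn, smul_zero]

lemma vb_bop {N M : ℕ} {p : BosonFock} (a : ℤ) (h : VB N p)
    (h1 : a.natAbs < M) (h2 : N ≤ M) : VB M (bop a p) := by
  intro n hn
  rcases lt_or_ge a 0 with ha | ha
  · rw [bop_neg_apply ha, pderiv_mul, h n (h2.trans hn), mul_zero,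
      pderiv_X_of_ne (by omega), zero_mul, add_zero]
  · rw [bop_nonneg_apply (not_lt.mpr ha), Derivation.map_smul, pderiv_comm', h n (h2.trans hn),
      map_zero, smul_zero]

lemma bop_apply_eq_zero {N : ℕ} {p : BosonFock} (h : VB N p) (h1 : 1 ≤ N)
    {k : ℤ} (hk : (N : ℤ) ≤ k) : bop k p = 0 := by
  rw [bop_nonneg_apply (by omega), h k.toNat (by omega), smul_zero]

lemma nord_ne_zero {N : ℕ} {p : BosonFock} (h : VB N p) (h1 : 1 ≤ N) {m k : ℤ}
    (hne : nord (m - k) k p ≠ 0) : m - (N : ℤ) < k ∧ k < (N : ℤ) := by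
  by_contra hcon
  apply hne
  unfold nord
  rcases not_and_or.mp hcon with hk | hk
  · -- k ≤ m - N, so N ≤ m - k
    have hmk : (N : ℤ) ≤ m - k := by omega
    split_ifs with ho
    · -- m - k ≤ k, so N ≤ k too
      rw [Module.End.mul_apply, bop_apply_eq_zero h h1 (le_trans hmk ho), map_zero]
    · rw [Module.End.mul_apply, bop_apply_eq_zero h h1 hmk, map_zero]
  · have hk' : (N : ℤ) ≤ k := by omega
    split_ifs with ho
    · rw [Module.End.mul_apply, bop_apply_eq_zero h h1 hk', map_zero]
    · rw [Module.End.mul_apply, bop_apply_eq_zero h h1 (by omega), map_zero]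

lemma support_nord_finite (m : ℤ) (p : BosonFock) :
    (Function.support fun k => nord (m - k) k p).Finite := by
  obtain ⟨N, h1, h⟩ := vb_exists p
  apply Set.Finite.subset (Set.finite_Ioo (m - (N : ℤ)) (N : ℤ))
  intro k hk
  exact Set.mem_Ioo.mpr (nord_ne_zero h h1 hk)

lemma vb_nord {N : ℕ} {p : BosonFock} (h : VB N p) (h1 : 1 ≤ N) {m k : ℤ}
    (hk1 : m - (N : ℤ) < k) (hk2 : k < (N : ℤ)) :
    VB (N + m.natAbs + 1) (nord (m - k) k p) := by
  have hkn : k.natAbs < N + m.natAbs + 1 := by omega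
  have hmkn : (m - k).natAbs < N + m.natAbs + 1 := by omega
  have hN : N ≤ N + m.natAbs + 1 := by omega
  unfold nord
  split_ifs with ho
  · rw [Module.End.mul_apply]
    exact vb_bop _ (vb_bop _ h hkn hN) hmkn (le_refl _)
  · rw [Module.End.mul_apply]
    exact vb_bop _ (vb_bop _ h hmkn hN) hkn (le_refl _)

lemma vb_finsum {N : ℕ} (f : ℤ → BosonFock) (h : ∀ k, VB N (f k))
    (hf : (Function.support f).Finite) : VB N (∑ᶠ k, f k) := by
  intro n hn
  have h2 : (pderiv n (R := ℂ) (σ := ℕ)) (∑ᶠ k, f k)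
      = (pderiv n (R := ℂ) (σ := ℕ)).toLinearMap.toAddMonoidHom (∑ᶠ k, f k) := rfl
  rw [h2, AddMonoidHom.map_finsum _ hf]
  exact finsum_eq_zero_of_forall_eq_zero (fun k => h k n hn)

lemma vb_Lop {N : ℕ} {p : BosonFock} (h : VB N p) (h1 : 1 ≤ N) (m : ℤ) :
    VB (N + m.natAbs + 1) (Lop m p) := by
  apply vb_smul
  apply vb_finsum _ _ (support_nord_finite m p)
  intro k
  by_cases hz : nord (m - k) k p = 0
  · rw [hz]; exact vb_zero _
  · obtain ⟨hk1, hk2⟩ := nord_ne_zero h h1 hz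
    exact vb_nord h h1 hk1 hk2

lemma bop_mul_bop (a c : ℤ) :
    bop a * bop c = bop c * bop a + (if a + c = 0 then (a : ℂ) else 0) • 1 := by
  -- key mixed case first
  have key : ∀ x y : ℤ, 0 < x → y < 0 →
      bop x * bop y = bop y * bop x + (if x + y = 0 then (x : ℂ) else 0) • 1 := by
    intro x y hx hy
    refine LinearMap.ext fun p => ?_
    simp only [Module.End.mul_apply, LinearMap.add_apply, LinearMap.smul_apply,
      Module.End.one_apply]
    rw [bop_neg_apply hy, bop_nonneg_apply (show ¬ x < 0 by omega), bop_neg_apply hy,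
      bop_nonneg_apply (show ¬ x < 0 by omega)]
    rw [pderiv_mul, pderiv_X, Pi.single_apply]
    have hiff : (y.natAbs = x.toNat) ↔ (x + y = 0) := by omega
    by_cases hc : x + y = 0
    · rw [if_pos (hiff.mpr hc), if_pos hc, one_mul, smul_add, mul_smul_comm, add_comm]
    · rw [if_neg (fun h => hc (hiff.mp h)), if_neg hc, zero_mul, zero_add, mul_smul_comm,
        zero_smul, add_zero]
  rcases lt_trichotomy a 0 with ha | ha | ha
  · rcases lt_trichotomy c 0 with hc | hc | hc
    · -- both multiplications commute
      rw [if_neg (by omega), zero_smul, add_zero]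
      refine LinearMap.ext fun p => ?_
      simp only [Module.End.mul_apply]
      rw [bop_neg_apply hc, bop_neg_apply ha, bop_neg_apply ha, bop_neg_apply hc]
      ring
    · subst hc
      rw [bop_zero, mul_zero, zero_mul, if_neg (by omega), zero_smul, add_zero]
    · -- a < 0 < c : use key with roles swapped
      rw [key c a hc ha, add_assoc, ← add_smul]
      have hz : (if c + a = 0 then (c : ℂ) else 0) + (if a + c = 0 then (a : ℂ) else 0) = 0 := by
        split_ifs with h1 h2 h3
        · have : a = -c := by omega
          subst this; push_cast; ring
        · omega
        · omega
        · simp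
      rw [hz, zero_smul, add_zero]
  · subst ha
    rw [bop_zero, mul_zero, zero_mul]
    have : (if (0 : ℤ) + c = 0 then ((0 : ℤ) : ℂ) else 0) = 0 := by split_ifs <;> simp
    rw [this, zero_smul, add_zero]
  · rcases lt_trichotomy c 0 with hc | hc | hc
    · exact key a c ha hc
    · subst hc
      rw [bop_zero, mul_zero, zero_mul, if_neg (by omega), zero_smul, add_zero]
    · -- both derivations commute
      rw [if_neg (by omega), zero_smul, add_zero]
      refine LinearMap.ext fun p => ?_
      simp only [Module.End.mul_apply]
      rw [bop_nonneg_apply (by omega), bop_nonneg_apply (by omega),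
        bop_nonneg_apply (by omega), bop_nonneg_apply (by omega),
        Derivation.map_smul, Derivation.map_smul, pderiv_comm', smul_comm]

lemma nord_eq (a c : ℤ) :
    nord a c = bop a * bop c - (if 0 < a ∧ a + c = 0 then (a : ℂ) else 0) • 1 := by
  unfold nord
  by_cases h1 : a ≤ c
  · rw [if_pos h1, if_neg (by omega), zero_smul, sub_zero]
  · rw [if_neg h1]
    by_cases h3 : 0 < a ∧ a + c = 0
    · rw [if_pos h3, bop_mul_bop c a, if_pos (show c + a = 0 by omega)]
      have hca : (c : ℂ) = -(a : ℂ) := by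
        have : c = -a := by omega
        rw [this]; push_cast; ring
      rw [hca]; module
    · rw [if_neg h3, bop_mul_bop c a, if_neg (by omega), zero_smul, add_zero, sub_zero]

/-- Abstract 4-fold commutator expansion in a ring with central correction terms. -/
lemma comm_expand {R : Type*} [Ring R] (A C D E P Q S T : R)
    (had : A * D = D * A + P) (hae : A * E = E * A + Q)
    (hcd : C * D = D * C + S) (hce : C * E = E * C + T)
    (hP : ∀ X, P * X = X * P) (hQ : ∀ X, Q * X = X * Q)
    (hS : ∀ X, S * X = X * S) (hT : ∀ X, T * X = X * T) :
    (A * C) * (D * E) - (D * E) * (A * C)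
      = (A * D) * T + (A * E) * S + (D * C) * Q + (E * C) * P := by
  have main : (A * C) * (D * E)
      = (D * E) * (A * C) + ((A * D) * T + (A * E) * S + (D * C) * Q + (E * C) * P) := by
    calc (A * C) * (D * E) = A * (C * D) * E := by noncomm_ring
      _ = A * (D * C) * E + A * (S * E) := by rw [hcd]; noncomm_ring
      _ = (A * D) * (C * E) + (A * E) * S := by rw [hS E]; noncomm_ring
      _ = (A * D) * (E * C) + (A * D) * (T * 1) + (A * E) * S := by rw [hce]; noncomm_ring
      _ = (D * A + P) * (E * C) + (A * D) * T + (A * E) * S := by rw [had]; noncomm_ring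
      _ = D * A * (E * C) + P * (E * C) + (A * D) * T + (A * E) * S := by noncomm_ring
      _ = D * (A * E) * C + (E * C) * P + (A * D) * T + (A * E) * S := by
            rw [hP (E * C)]; noncomm_ring
      _ = D * (E * A) * C + D * (Q * C) + (E * C) * P + (A * D) * T + (A * E) * S := by
            rw [hae]; noncomm_ring
      _ = (D * E) * (A * C) + ((A * D) * T + (A * E) * S + (D * C) * Q + (E * C) * P) := by
            rw [hQ C]; noncomm_ring
  rw [main]; abel

lemma central_smul_one (z : ℂ) (X : Module.End ℂ BosonFock) :
    (z • 1) * X = X * (z • 1) := by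
  rw [smul_mul_assoc, one_mul, mul_smul_comm, mul_one]

lemma mul_z_one (X : Module.End ℂ BosonFock) (z : ℂ) : X * (z • 1) = z • X := by
  rw [mul_smul_comm, mul_one]

/-- The key commutator of two products of boson modes. -/
lemma bop_comm4 (a c d e : ℤ) :
    (bop a * bop c) * (bop d * bop e) - (bop d * bop e) * (bop a * bop c)
      = (if c + e = 0 then (c : ℂ) else 0) • (bop a * bop d)
      + (if c + d = 0 then (c : ℂ) else 0) • (bop a * bop e)
      + (if a + e = 0 then (a : ℂ) else 0) • (bop d * bop c)
      + (if a + d = 0 then (a : ℂ) else 0) • (bop e * bop c) := by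
  rw [comm_expand (bop a) (bop c) (bop d) (bop e) _ _ _ _
    (bop_mul_bop a d) (bop_mul_bop a e) (bop_mul_bop c d) (bop_mul_bop c e)
    (central_smul_one _) (central_smul_one _) (central_smul_one _) (central_smul_one _)]
  rw [mul_z_one, mul_z_one, mul_z_one, mul_z_one]

lemma finsum_swap {V : Type*} [AddCommMonoid V] (f : ℤ → ℤ → V) (S T : Set ℤ)
    (hS : S.Finite) (hT : T.Finite) (h : ∀ j k, f j k ≠ 0 → j ∈ S ∧ k ∈ T) :
    ∑ᶠ j, ∑ᶠ k, f j k = ∑ᶠ k, ∑ᶠ j, f j k := by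
  classical
  have hTsub : ∀ j, (Function.support fun k => f j k) ⊆ ↑hT.toFinset := by
    intro j k hk
    simpa using (h j k hk).2
  have hSsub : ∀ k, (Function.support fun j => f j k) ⊆ ↑hS.toFinset := by
    intro k j hj
    simpa using (h j k hj).1
  have e1 : ∑ᶠ j, ∑ᶠ k, f j k = ∑ j ∈ hS.toFinset, ∑ k ∈ hT.toFinset, f j k := by
    rw [finsum_eq_sum_of_support_subset _ (s := hS.toFinset) ?_]
    · exact Finset.sum_congr rfl fun j _ => finsum_eq_sum_of_support_subset _ (hTsub j)
    · intro j hj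
      simp only [Function.mem_support] at hj
      by_contra hjS
      exact hj (finsum_eq_zero_of_forall_eq_zero fun k => by
        by_contra hk
        exact hjS (by simpa using (h j k hk).1))
  have e2 : ∑ᶠ k, ∑ᶠ j, f j k = ∑ k ∈ hT.toFinset, ∑ j ∈ hS.toFinset, f j k := by
    rw [finsum_eq_sum_of_support_subset _ (s := hT.toFinset) ?_]
    · exact Finset.sum_congr rfl fun k _ => finsum_eq_sum_of_support_subset _ (hSsub k)
    · intro k hk
      simp only [Function.mem_support] at hk
      by_contra hkT
      exact hk (finsum_eq_zero_of_forall_eq_zero fun j => by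
        by_contra hj
        exact hkT (by simpa using (h j k hj).2))
  rw [e1, e2, Finset.sum_comm]

lemma to_nord (a c : ℤ) (p : BosonFock) :
    bop a (bop c p) = nord a c p + (if 0 < a ∧ a + c = 0 then (a : ℂ) else 0) • p := by
  have h := congrArg (fun T : Module.End ℂ BosonFock => T p) (nord_eq a c)
  simp only [LinearMap.sub_apply, Module.End.mul_apply, LinearMap.smul_apply,
    Module.End.one_apply] at h
  rw [h]
  abel

lemma nord_comm4 (a c d e : ℤ) :
    nord a c * nord d e - nord d e * nord a c
      = (bop a * bop c) * (bop d * bop e) - (bop d * bop e) * (bop a * bop c) := by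
  rw [nord_eq a c, nord_eq d e]
  generalize (if 0 < a ∧ a + c = 0 then (a : ℂ) else 0) = z
  generalize (if 0 < d ∧ d + e = 0 then (d : ℂ) else 0) = w
  simp only [sub_mul, mul_sub, smul_mul_assoc, mul_smul_comm, one_mul, mul_one]
  module

/-- The `k`-sum of the commutator `[:b_{l-j}b_j:, :b_{m-k}b_k:]` applied to `p`. -/
lemma key_j (l m j : ℤ) (p : BosonFock) :
    (∑ᶠ k : ℤ, (nord (l - j) j (nord (m - k) k p) - nord (m - k) k (nord (l - j) j p)))
      = ((2 : ℂ) * (j : ℂ)) • bop (l - j) (bop (m + j) p)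
      + ((2 : ℂ) * ((l : ℂ) - (j : ℂ))) • bop (l + m - j) (bop j p) := by
  have hpt : ∀ k : ℤ,
      nord (l - j) j (nord (m - k) k p) - nord (m - k) k (nord (l - j) j p)
        = (if j + k = 0 then (j : ℂ) else 0) • bop (l - j) (bop (m - k) p)
        + ((if j + (m - k) = 0 then (j : ℂ) else 0) • bop (l - j) (bop k p)
        + ((if (l - j) + k = 0 then ((l - j : ℤ) : ℂ) else 0) • bop (m - k) (bop j p)
        + (if (l - j) + (m - k) = 0 then ((l - j : ℤ) : ℂ) else 0) • bop k (bop j p))) := by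
    intro k
    have hc := congrArg (fun T : Module.End ℂ BosonFock => T p)
      ((nord_comm4 (l - j) j (m - k) k).trans (bop_comm4 (l - j) j (m - k) k))
    simpa only [LinearMap.sub_apply, LinearMap.add_apply, LinearMap.smul_apply,
      Module.End.mul_apply, add_assoc] using hc
  rw [finsum_congr hpt]
  have hf1 : (Function.support fun k =>
      (if j + k = 0 then (j : ℂ) else 0) • bop (l - j) (bop (m - k) p)).Finite := by
    apply Set.Finite.subset (Set.finite_singleton (-j))
    intro k hk
    simp only [Function.mem_support] at hk
    by_contra hne
    simp only [Set.mem_singleton_iff] at hne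
    exact hk (by rw [if_neg (by omega), zero_smul])
  have hf2 : (Function.support fun k =>
      (if j + (m - k) = 0 then (j : ℂ) else 0) • bop (l - j) (bop k p)).Finite := by
    apply Set.Finite.subset (Set.finite_singleton (j + m))
    intro k hk
    simp only [Function.mem_support] at hk
    by_contra hne
    simp only [Set.mem_singleton_iff] at hne
    exact hk (by rw [if_neg (by omega), zero_smul])
  have hf3 : (Function.support fun k =>
      (if (l - j) + k = 0 then ((l - j : ℤ) : ℂ) else 0) • bop (m - k) (bop j p)).Finite := by
    apply Set.Finite.subset (Set.finite_singleton (j - l))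
    intro k hk
    simp only [Function.mem_support] at hk
    by_contra hne
    simp only [Set.mem_singleton_iff] at hne
    exact hk (by rw [if_neg (by omega), zero_smul])
  have hf4 : (Function.support fun k =>
      (if (l - j) + (m - k) = 0 then ((l - j : ℤ) : ℂ) else 0) • bop k (bop j p)).Finite := by
    apply Set.Finite.subset (Set.finite_singleton (l + m - j))
    intro k hk
    simp only [Function.mem_support] at hk
    by_contra hne
    simp only [Set.mem_singleton_iff] at hne
    exact hk (by rw [if_neg (by omega), zero_smul])
  rw [finsum_add_distrib hf1 (Set.Finite.subset (hf2.union (hf3.union hf4))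
    ((Function.support_add _ _).trans (Set.union_subset_union_right _
      (Function.support_add _ _))))]
  rw [finsum_add_distrib hf2 (Set.Finite.subset (hf3.union hf4) (Function.support_add _ _))]
  rw [finsum_add_distrib hf3 hf4]
  rw [finsum_eq_single _ (-j) (fun x hx => by rw [if_neg (by omega), zero_smul]),
    finsum_eq_single _ (j + m) (fun x hx => by rw [if_neg (by omega), zero_smul]),
    finsum_eq_single _ (j - l) (fun x hx => by rw [if_neg (by omega), zero_smul]),
    finsum_eq_single _ (l + m - j) (fun x hx => by rw [if_neg (by omega), zero_smul])]
  rw [if_pos (by omega : j + -j = 0), if_pos (by omega : j + (m - (j + m)) = 0),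
    if_pos (by omega : (l - j) + (j - l) = 0), if_pos (by omega : (l - j) + (m - (l + m - j)) = 0)]
  rw [show m - -j = m + j by ring, show j + m = m + j by ring,
    show m - (j - l) = l + m - j by ring,
    show ((l - j : ℤ) : ℂ) = (l : ℂ) - (j : ℂ) by push_cast; ring]
  module

lemma Ico_succ_insert (n : ℤ) (hn : 0 ≤ n) :
    Finset.Ico (0 : ℤ) (n + 1) = insert n (Finset.Ico (0 : ℤ) n) := by
  ext x
  simp only [Finset.mem_Ico, Finset.mem_insert]
  omega

lemma gauss_sum : ∀ n : ℤ, 0 ≤ n →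
    ∑ j ∈ Finset.Ico (0 : ℤ) n, (j : ℂ) = ((n : ℂ) * ((n : ℂ) - 1)) / 2 := by
  refine Int.le_induction (by simp) ?_
  intro n hn ih
  rw [Ico_succ_insert n hn, Finset.sum_insert (by simp), ih]
  push_cast
  ring

lemma cube_sum : ∀ n : ℤ, 0 ≤ n →
    ∑ j ∈ Finset.Ico (0 : ℤ) n, ((j : ℂ) * ((n : ℂ) - (j : ℂ)))
      = ((n : ℂ) ^ 3 - (n : ℂ)) / 6 := by
  refine Int.le_induction (by simp) ?_
  intro n hn ih
  rw [Ico_succ_insert n hn, Finset.sum_insert (by simp)]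
  have hsplit : ∀ j : ℤ, (j : ℂ) * (((n + 1 : ℤ) : ℂ) - (j : ℂ))
      = (j : ℂ) * ((n : ℂ) - (j : ℂ)) + (j : ℂ) := by
    intro j; push_cast; ring
  rw [Finset.sum_congr rfl (fun j _ => hsplit j), Finset.sum_add_distrib, ih,
    gauss_sum n hn]
  push_cast
  ring

/-- Central-charge coefficient function. -/
noncomputable def gam (l m j : ℤ) : ℂ :=
  (2 : ℂ) * (j : ℂ) * (if 0 < l - j ∧ l - j + (m + j) = 0 then ((l - j : ℤ) : ℂ) else 0)
  + (2 : ℂ) * ((l : ℂ) - (j : ℂ))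
      * (if 0 < l + m - j ∧ l + m - j + j = 0 then ((l + m - j : ℤ) : ℂ) else 0)

lemma gam_eq_zero (l m j : ℤ) (h : ¬ ((0 ≤ j ∧ j < l) ∨ (l ≤ j ∧ j < 0))) :
    gam l m j = 0 := by
  unfold gam
  by_cases hc1 : 0 < l - j ∧ l - j + (m + j) = 0
  · by_cases hc2 : 0 < l + m - j ∧ l + m - j + j = 0
    · rw [if_pos hc1, if_pos hc2]
      have hm : m = -l := by omega
      subst hm
      push_cast
      ring
    · exfalso
      apply h
      left
      constructor
      · by_contra hj
        exact hc2 ⟨by omega, by omega⟩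
      · omega
  · by_cases hc2 : 0 < l + m - j ∧ l + m - j + j = 0
    · exfalso
      apply h
      right
      exact ⟨by omega, by omega⟩
    · rw [if_neg hc1, if_neg hc2]
      ring

lemma gam_support (l m : ℤ) :
    Function.support (gam l m) ⊆ Set.Icc (-(l.natAbs : ℤ)) (l.natAbs : ℤ) := by
  intro j hj
  simp only [Function.mem_support] at hj
  by_contra hout
  simp only [Set.mem_Icc, not_and_or, not_le] at hout
  exact hj (gam_eq_zero l m j (by omega))

lemma gam_sum (l m : ℤ) :
    ∑ᶠ j : ℤ, gam l m j = if l + m = 0 then ((l ^ 3 - l : ℤ) : ℂ) / 3 else 0 := by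
  by_cases hlm : l + m = 0
  · rw [if_pos hlm]
    have hm : m = -l := by omega
    subst hm
    by_cases hl : 0 ≤ l
    · -- sum over [0, l)
      rw [finsum_eq_sum_of_support_subset _ (s := Finset.Ico (0 : ℤ) l) ?_]
      · have hterm : ∀ j ∈ Finset.Ico (0 : ℤ) l,
            gam l (-l) j = ((j : ℂ) * ((l : ℂ) - (j : ℂ))) * 2 := by
          intro j hj
          simp only [Finset.mem_Ico] at hj
          unfold gam
          rw [if_pos ⟨by omega, by omega⟩, if_neg (by omega)]
          push_cast
          ring
        rw [Finset.sum_congr rfl hterm, ← Finset.sum_mul, cube_sum l hl]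
        push_cast
        ring
      · intro j hj
        simp only [Function.mem_support] at hj
        simp only [Finset.coe_Ico, Set.mem_Ico]
        by_contra hout
        exact hj (by
          unfold gam
          by_cases hj0 : j < 0
          · rw [if_pos ⟨by omega, by omega⟩, if_pos ⟨by omega, by omega⟩]
            push_cast; ring
          · rw [if_neg (by omega), if_neg (by omega)]; ring)
    · -- l < 0 : reindex by j ↦ -j
      push_neg at hl
      have hneg : ∑ᶠ i : ℤ, gam l (-l) (-i) = ∑ᶠ j : ℤ, gam l (-l) j :=
        finsum_eq_of_bijective (fun i => -i)
          ⟨neg_injective, fun y => ⟨-y, neg_neg y⟩⟩ (fun i => rfl)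
      rw [← hneg]
      rw [finsum_eq_sum_of_support_subset _ (s := Finset.Ico (1 : ℤ) (-l + 1)) ?_]
      · have hterm : ∀ i ∈ Finset.Ico (1 : ℤ) (-l + 1),
            gam l (-l) (-i) = ((i : ℂ) * ((((-l : ℤ)) : ℂ) - (i : ℂ))) * (-2) := by
          intro i hi
          simp only [Finset.mem_Ico] at hi
          unfold gam
          rw [if_neg (by omega), if_pos ⟨by omega, by omega⟩]
          push_cast
          ring
        rw [Finset.sum_congr rfl hterm, ← Finset.sum_mul]
        have h1 : Finset.Ico (1 : ℤ) (-l + 1) = insert (-l) (Finset.Ico (1 : ℤ) (-l)) := by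
          ext x
          simp only [Finset.mem_Ico, Finset.mem_insert]
          omega
        have h0 : Finset.Ico (0 : ℤ) (-l) = insert 0 (Finset.Ico (1 : ℤ) (-l)) := by
          ext x
          simp only [Finset.mem_Ico, Finset.mem_insert]
          omega
        have hcube := cube_sum (-l) (by omega)
        rw [h0, Finset.sum_insert (by simp)] at hcube
        norm_num at hcube
        rw [h1, Finset.sum_insert (by simp)]
        push_cast at hcube ⊢
        rw [hcube]
        ring
      · intro i hi
        simp only [Function.mem_support] at hi
        simp only [Finset.coe_Ico, Set.mem_Ico]
        by_contra hout
        exact hi (by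
          unfold gam
          by_cases hip : -l < i
          · rw [if_pos ⟨by omega, by omega⟩, if_pos ⟨by omega, by omega⟩]
            push_cast; ring
          · rw [if_neg (by omega), if_neg (by omega)]; ring)
  · rw [if_neg hlm]
    apply finsum_eq_zero_of_forall_eq_zero
    intro j
    unfold gam
    rw [if_neg (by omega), if_neg (by omega)]
    ring

lemma step6 (l m : ℤ) (p : BosonFock) :
    ∑ᶠ j : ℤ, (((2 : ℂ) * (j : ℂ)) • bop (l - j) (bop (m + j) p)
      + ((2 : ℂ) * ((l : ℂ) - (j : ℂ))) • bop (l + m - j) (bop j p))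
    = (((l : ℂ) - (m : ℂ)) * 4) • Lop (l + m) p
      + (if l + m = 0 then ((l ^ 3 - l : ℤ) : ℂ) / 3 else 0) • p := by
  have hu := support_nord_finite (l + m) p
  have hre : ∀ j : ℤ,
      ((2 : ℂ) * (j : ℂ)) • bop (l - j) (bop (m + j) p)
        + ((2 : ℂ) * ((l : ℂ) - (j : ℂ))) • bop (l + m - j) (bop j p)
      = (((2 : ℂ) * (j : ℂ)) • nord (l + m - (m + j)) (m + j) p
        + ((2 : ℂ) * ((l : ℂ) - (j : ℂ))) • nord (l + m - j) j p)
        + gam l m j • p := by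
    intro j
    rw [to_nord (l - j) (m + j) p, to_nord (l + m - j) j p,
      show nord (l - j) (m + j) p = nord (l + m - (m + j)) (m + j) p by congr 1; ring]
    unfold gam
    module
  have hW1fin : (Function.support fun j : ℤ =>
      ((2 : ℂ) * (j : ℂ)) • nord (l + m - (m + j)) (m + j) p).Finite := by
    apply Set.Finite.subset (hu.preimage ((add_right_injective m).injOn))
    intro j hj
    simp only [Function.mem_support] at hj
    simp only [Set.mem_preimage, Function.mem_support]
    intro h0
    exact hj (by rw [h0, smul_zero])
  have hW2fin : (Function.support fun j : ℤ =>
      ((2 : ℂ) * ((l : ℂ) - (j : ℂ))) • nord (l + m - j) j p).Finite := by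
    apply Set.Finite.subset hu
    intro j hj
    simp only [Function.mem_support] at hj
    simp only [Function.mem_support]
    intro h0
    exact hj (by rw [h0, smul_zero])
  have hGfin : (Function.support fun j : ℤ => gam l m j • p).Finite := by
    apply Set.Finite.subset ((Set.finite_Icc (-(l.natAbs : ℤ)) (l.natAbs : ℤ)).subset
      (gam_support l m))
    intro j hj
    simp only [Function.mem_support] at hj
    simp only [Function.mem_support]
    intro h0
    exact hj (by rw [h0, zero_smul])
  rw [finsum_congr hre,
    finsum_add_distrib (Set.Finite.subset (hW1fin.union hW2fin) (Function.support_add _ _))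
      hGfin,
    finsum_add_distrib hW1fin hW2fin]
  have hbij : Function.Bijective (fun i : ℤ => m + i) :=
    ⟨fun a b hab => by have h : m + a = m + b := hab; omega,
     fun y => ⟨y - m, show m + (y - m) = y by omega⟩⟩
  have hS1 : ∑ᶠ j : ℤ, ((2 : ℂ) * (j : ℂ)) • nord (l + m - (m + j)) (m + j) p
      = ∑ᶠ j : ℤ, ((2 : ℂ) * ((j : ℂ) - (m : ℂ))) • nord (l + m - j) j p := by
    apply finsum_eq_of_bijective (fun i : ℤ => m + i) hbij
    intro i
    show ((2 : ℂ) * (i : ℂ)) • nord (l + m - (m + i)) (m + i) p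
      = ((2 : ℂ) * (((m + i : ℤ) : ℂ) - (m : ℂ))) • nord (l + m - (m + i)) (m + i) p
    rw [show ((m + i : ℤ) : ℂ) - (m : ℂ) = (i : ℂ) by push_cast; ring]
  rw [hS1]
  have hA : (Function.support fun j : ℤ =>
      ((2 : ℂ) * ((j : ℂ) - (m : ℂ))) • nord (l + m - j) j p).Finite := by
    apply Set.Finite.subset hu
    intro j hj
    simp only [Function.mem_support] at hj
    simp only [Function.mem_support]
    intro h0
    exact hj (by rw [h0, smul_zero])
  rw [← finsum_add_distrib hA hW2fin]
  have hmerge : ∀ j : ℤ,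
      ((2 : ℂ) * ((j : ℂ) - (m : ℂ))) • nord (l + m - j) j p
        + ((2 : ℂ) * ((l : ℂ) - (j : ℂ))) • nord (l + m - j) j p
      = ((2 : ℂ) * ((l : ℂ) - (m : ℂ))) • nord (l + m - j) j p := by
    intro j
    rw [← add_smul]
    congr 1
    ring
  rw [finsum_congr hmerge, ← smul_finsum' ((2 : ℂ) * ((l : ℂ) - (m : ℂ))) hu]
  congr 1
  · rw [show Lop (l + m) p = (1 / 2 : ℂ) • ∑ᶠ k : ℤ, nord (l + m - k) k p from rfl,
      smul_smul, show ((l : ℂ) - (m : ℂ)) * 4 * (1 / 2) = 2 * ((l : ℂ) - (m : ℂ)) by ring,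
      smul_finsum' _ hu]
  · rw [← finsum_smul' (Set.Finite.subset ((Set.finite_Icc _ _).subset (gam_support l m))
      (fun j hj => hj)) p, gam_sum l m]


/-- Virasoro commutation relations with central charge 1:
`[L_l, L_m] = (l − m)·L_{l+m} + ((l³ − l)/12)·δ_{l+m,0}·id`. -/
theorem virasoro_commutation (l m : ℤ) (p : BosonFock) :
    Lop l (Lop m p) - Lop m (Lop l p) =
      ((l - m : ℤ) : ℂ) • Lop (l + m) p +
        (if l + m = 0 then (((l ^ 3 - l : ℤ) : ℂ) / 12) else 0) • p := by
  obtain ⟨N, hN1, hNp⟩ := vb_exists p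
  have hsupm := support_nord_finite m p
  have hsupl := support_nord_finite l p
  -- pointwise expansion of outer nord applied to Lop
  have hptl : ∀ j : ℤ, nord (l - j) j (Lop m p)
      = (1 / 2 : ℂ) • ∑ᶠ k : ℤ, nord (l - j) j (nord (m - k) k p) := by
    intro j
    rw [show Lop m p = (1 / 2 : ℂ) • ∑ᶠ k : ℤ, nord (m - k) k p from rfl, map_smul]
    congr 1
    exact (nord (l - j) j).toAddMonoidHom.map_finsum hsupm
  have hptm : ∀ j : ℤ, nord (m - j) j (Lop l p)
      = (1 / 2 : ℂ) • ∑ᶠ k : ℤ, nord (m - j) j (nord (l - k) k p) := by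
    intro j
    rw [show Lop l p = (1 / 2 : ℂ) • ∑ᶠ k : ℤ, nord (l - k) k p from rfl, map_smul]
    congr 1
    exact (nord (m - j) j).toAddMonoidHom.map_finsum hsupl
  -- finiteness of the outer supports
  have hfinF : (Function.support fun j : ℤ =>
      ∑ᶠ k : ℤ, nord (l - j) j (nord (m - k) k p)).Finite := by
    apply Set.Finite.subset (support_nord_finite l (Lop m p))
    intro j hj
    simp only [Function.mem_support] at hj ⊢
    rw [hptl j]
    exact smul_ne_zero (by norm_num) hj
  have hfinG : (Function.support fun j : ℤ =>
      ∑ᶠ k : ℤ, nord (m - j) j (nord (l - k) k p)).Finite := by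
    apply Set.Finite.subset (support_nord_finite m (Lop l p))
    intro j hj
    simp only [Function.mem_support] at hj ⊢
    rw [hptm j]
    exact smul_ne_zero (by norm_num) hj
  -- step 1 and step 2
  have step1 : Lop l (Lop m p)
      = (1 / 4 : ℂ) • ∑ᶠ j : ℤ, ∑ᶠ k : ℤ, nord (l - j) j (nord (m - k) k p) := by
    calc Lop l (Lop m p) = (1 / 2 : ℂ) • ∑ᶠ j : ℤ, nord (l - j) j (Lop m p) := rfl
      _ = (1 / 2 : ℂ) • ∑ᶠ j : ℤ, (1 / 2 : ℂ) •
            ∑ᶠ k : ℤ, nord (l - j) j (nord (m - k) k p) := by rw [finsum_congr hptl]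
      _ = (1 / 2 : ℂ) • (1 / 2 : ℂ) •
            ∑ᶠ j : ℤ, ∑ᶠ k : ℤ, nord (l - j) j (nord (m - k) k p) := by
            rw [smul_finsum' (1 / 2 : ℂ) hfinF]
      _ = _ := by rw [smul_smul]; norm_num
  have step2 : Lop m (Lop l p)
      = (1 / 4 : ℂ) • ∑ᶠ j : ℤ, ∑ᶠ k : ℤ, nord (m - j) j (nord (l - k) k p) := by
    calc Lop m (Lop l p) = (1 / 2 : ℂ) • ∑ᶠ j : ℤ, nord (m - j) j (Lop l p) := rfl
      _ = (1 / 2 : ℂ) • ∑ᶠ j : ℤ, (1 / 2 : ℂ) •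
            ∑ᶠ k : ℤ, nord (m - j) j (nord (l - k) k p) := by rw [finsum_congr hptm]
      _ = (1 / 2 : ℂ) • (1 / 2 : ℂ) •
            ∑ᶠ j : ℤ, ∑ᶠ k : ℤ, nord (m - j) j (nord (l - k) k p) := by
            rw [smul_finsum' (1 / 2 : ℂ) hfinG]
      _ = _ := by rw [smul_smul]; norm_num
  -- Fubini swap for the second double sum
  have hswap : ∑ᶠ j : ℤ, ∑ᶠ k : ℤ, nord (m - j) j (nord (l - k) k p)
      = ∑ᶠ j : ℤ, ∑ᶠ k : ℤ, nord (m - k) k (nord (l - j) j p) := by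
    exact finsum_swap _ (Set.Ioo ((m : ℤ) - (N + l.natAbs + 1 : ℕ)) ((N + l.natAbs + 1 : ℕ) : ℤ))
      (Set.Ioo ((l : ℤ) - (N : ℕ)) ((N : ℕ) : ℤ)) (Set.finite_Ioo _ _) (Set.finite_Ioo _ _)
      (by
        intro j k hjk
        have hk : nord (l - k) k p ≠ 0 := fun h0 => hjk (by rw [h0, map_zero])
        have hkT := nord_ne_zero hNp hN1 hk
        have hq := vb_nord hNp hN1 hkT.1 hkT.2
        have hj := nord_ne_zero hq (by omega) hjk
        constructor
        · simp only [Set.mem_Ioo]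
          push_cast at hj ⊢
          omega
        · simp only [Set.mem_Ioo]
          exact hkT)
  -- subtract the double sums
  have hdiff : Lop l (Lop m p) - Lop m (Lop l p)
      = (1 / 4 : ℂ) • ∑ᶠ j : ℤ, ∑ᶠ k : ℤ,
          (nord (l - j) j (nord (m - k) k p) - nord (m - k) k (nord (l - j) j p)) := by
    rw [step1, step2, hswap, ← smul_sub]
    congr 1
    have hinner : ∀ j : ℤ,
        ∑ᶠ k : ℤ, (nord (l - j) j (nord (m - k) k p) - nord (m - k) k (nord (l - j) j p))
          = (∑ᶠ k : ℤ, nord (l - j) j (nord (m - k) k p))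
            - ∑ᶠ k : ℤ, nord (m - k) k (nord (l - j) j p) := by
      intro j
      apply finsum_sub_distrib
      · apply Set.Finite.subset hsupm
        intro k hk
        simp only [Function.mem_support] at hk ⊢
        intro h0
        exact hk (by rw [h0, map_zero])
      · exact support_nord_finite m (nord (l - j) j p)
    rw [finsum_congr hinner]
    have hG2 : (Function.support fun j : ℤ =>
        ∑ᶠ k : ℤ, nord (m - k) k (nord (l - j) j p)).Finite := by
      apply Set.Finite.subset hsupl
      intro j hj
      simp only [Function.mem_support] at hj ⊢
      intro h0
      apply hj
      apply finsum_eq_zero_of_forall_eq_zero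
      intro k
      rw [h0, map_zero]
    exact (finsum_sub_distrib hfinF hG2).symm
  -- apply the commutator computation and step 6
  rw [hdiff, finsum_congr (fun j => key_j l m j p), step6 l m p, smul_add, smul_smul, smul_smul]
  congr 1
  · congr 1
    push_cast
    ring
  · congr 1
    split_ifs
    · ring
    · ring
end

section
/- Let K : ℕ × ℕ → ℂ be a symmetric kernel (K(i,j) = K(j,i)). Define S on finite lists of indices recursively by: S([]) = 1, S([i]) = 0, and for a list (i₁, …, i_n) with n ≥ 2, S(i₁,…,i_n) = Σ_{l=2}^{n} K(i₁, i_l)·S(i₂, …, î_l, …, i_n) (hat denotes omission). Then for n even, S(i₁,…,i_n) equals the sum over all perfect matchings M of {1,…,n} of the product Π_{{a,b}∈M} K(i_a, i_b) (the hafnian), and S = 0 for n odd. (Wick's theorem for the bosonic n-point functions, with K(a,b) = 1/(u(z_a)−u(z_b))².) -/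
/-- The bosonic Wick recursion: `S([]) = 1`, `S([i]) = 0`, and
`S(i₁,…,i_n) = Σ_{l=2}^n K(i₁, i_l)·S(i₂,…,î_l,…,i_n)`. -/
noncomputable def wick (K : ℕ → ℕ → ℂ) : List ℕ → ℂ
  | [] => 1
  | [_] => 0
  | i :: rest =>
      ∑ l : Fin rest.length, K i (rest.get l) * wick K (rest.eraseIdx (l : ℕ))
termination_by v => v.length
decreasing_by
  have hl := l.isLt
  simp [List.length_eraseIdx]
  all_goals omega

/-! A perfect matching of `{0, …, m + 1}` is the same as the partner `l + 1` of `0` together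
with a perfect matching of the remaining `m` points, enumerated increasingly by
`k ↦ (l.succAbove k).succ`. This enumeration is monotone, so every remaining pair keeps its
orientation `i < σ i` and the hafnian obeys the same expansion along the first index as `wick`.
Both agree on lists of length 0 and 1, and the same expansion shows that the hafnian of an
odd number of points vanishes. -/

open Finset

namespace Equiv

lemma optionCongr_removeNone {α β : Type*} {e : Option α ≃ Option β} (h : e none = none) :
    optionCongr (removeNone e) = e := by
  ext1 (_ | x)
  · simp [h]
  · obtain ⟨y, hy⟩ := Option.ne_none_iff_exists'.mp
      (fun hx => Option.some_ne_none x (e.injective (hx.trans h.symm)))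
    exact removeNone_some e ⟨y, hy⟩

namespace Perm

variable {α β : Type*}

def IsPerfectMatching (σ : Perm α) : Prop := ∀ i, σ i ≠ i ∧ σ (σ i) = i

instance [Fintype α] [DecidableEq α] : DecidablePred (IsPerfectMatching : Perm α → Prop) :=
  fun σ => inferInstanceAs (Decidable (∀ i, σ i ≠ i ∧ σ (σ i) = i))

lemma isPerfectMatching_permCongr_iff (e : α ≃ β) (σ : Perm α) :
    (e.permCongr σ).IsPerfectMatching ↔ σ.IsPerfectMatching := by
  simp only [IsPerfectMatching, permCongr_apply, symm_apply_apply, ne_eq, ← e.eq_symm_apply]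
  exact (e.forall_congr_left (p := fun i => ¬σ i = i ∧ σ (σ i) = i)).symm

variable [DecidableEq β]

def pairNone (τ : Perm β) : Perm (Option (Option β)) :=
  swap none (some none) * τ.optionCongr.optionCongr

@[simp] lemma pairNone_none (τ : Perm β) : pairNone τ none = some none := by
  simp [pairNone]

@[simp] lemma pairNone_some_none (τ : Perm β) : pairNone τ (some none) = none := by
  simp [pairNone]

@[simp] lemma pairNone_some_some (τ : Perm β) (k : β) :
    pairNone τ (some (some k)) = some (some (τ k)) := by
  simp [pairNone, swap_apply_of_ne_of_ne]

lemma pairNone_injective : Function.Injective (pairNone : Perm β → _) := fun τ τ' h =>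
  Equiv.ext fun k => by simpa using congrArg (· (some (some k))) h

lemma isPerfectMatching_pairNone_iff (τ : Perm β) :
    (pairNone τ).IsPerfectMatching ↔ τ.IsPerfectMatching := by
  refine ⟨fun h k => by simpa using h (some (some k)), fun h => ?_⟩
  rintro (_ | _ | k) <;> simp [(h _).1, (h _).2]

lemma exists_pairNone_eq {σ : Perm (Option (Option β))} (hσ : σ.IsPerfectMatching)
    (h0 : σ none = some none) : ∃ τ, pairNone τ = σ := by
  set ρ := swap none (some none) * σ
  have hρ : ρ none = none := by simp [ρ, h0]
  have hρ' : removeNone ρ none = none := by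
    apply Option.some_injective
    rw [removeNone_some ρ ⟨none, ?_⟩] <;> simp [ρ, ← h0, (hσ none).2]
  refine ⟨removeNone (removeNone ρ), ?_⟩
  rw [pairNone, optionCongr_removeNone hρ', optionCongr_removeNone hρ, swap_mul_self_mul]

end Perm
end Equiv

namespace Fin

variable {m : ℕ} (l : Fin (m + 1))

def pairZeroEquiv : Fin (m + 2) ≃ Option (Option (Fin m)) :=
  (finSuccEquiv (m + 1)).trans (Equiv.optionCongr (finSuccEquiv' l))

@[simp] lemma pairZeroEquiv_symm_none : (pairZeroEquiv l).symm none = 0 := by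
  simp [Equiv.symm_apply_eq, pairZeroEquiv]

@[simp] lemma pairZeroEquiv_succ : pairZeroEquiv l l.succ = some none := by
  simp [pairZeroEquiv]

@[simp] lemma pairZeroEquiv_symm_some_none : (pairZeroEquiv l).symm (some none) = l.succ := by
  simp [Equiv.symm_apply_eq]

@[simp] lemma pairZeroEquiv_symm_some_some (k : Fin m) :
    (pairZeroEquiv l).symm (some (some k)) = (l.succAbove k).succ := by
  simp [Equiv.symm_apply_eq, pairZeroEquiv, finSuccEquiv'_succAbove]

end Fin

namespace Equiv.Perm

open Fin

variable {m : ℕ} (l : Fin (m + 1)) (τ : Perm (Fin m))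

def pairZero : Perm (Fin (m + 2)) := (pairZeroEquiv l).symm.permCongr (pairNone τ)

lemma pairZero_pairZeroEquiv_symm (y : Option (Option (Fin m))) :
    pairZero l τ ((pairZeroEquiv l).symm y) = (pairZeroEquiv l).symm (pairNone τ y) := by
  simp [pairZero, permCongr_apply]

@[simp] lemma pairZero_zero : pairZero l τ 0 = l.succ := by
  simpa using pairZero_pairZeroEquiv_symm l τ none

@[simp] lemma pairZero_succ : pairZero l τ l.succ = 0 := by
  simpa using pairZero_pairZeroEquiv_symm l τ (some none)

@[simp] lemma pairZero_succ_succAbove (k : Fin m) :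
    pairZero l τ (l.succAbove k).succ = (l.succAbove (τ k)).succ := by
  simpa using pairZero_pairZeroEquiv_symm l τ (some (some k))

lemma isPerfectMatching_pairZero_iff :
    (pairZero l τ).IsPerfectMatching ↔ τ.IsPerfectMatching :=
  (isPerfectMatching_permCongr_iff _ _).trans (isPerfectMatching_pairNone_iff τ)

lemma pairZero_inj {l' : Fin (m + 1)} {τ' : Perm (Fin m)} :
    pairZero l τ = pairZero l' τ' ↔ l = l' ∧ τ = τ' := by
  refine ⟨fun h => ?_, fun ⟨hl, hτ⟩ => hl ▸ hτ ▸ rfl⟩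
  obtain rfl : l = l' := succ_injective _ (by simpa using congrArg (· 0) h)
  exact ⟨rfl, pairNone_injective ((pairZeroEquiv l).symm.permCongr.injective h)⟩

lemma exists_pairZero_eq {σ : Perm (Fin (m + 2))} (hσ : σ.IsPerfectMatching) :
    ∃ l τ, pairZero l τ = σ := by
  obtain ⟨l, hl⟩ := exists_succ_eq.mpr (hσ 0).1
  have h0 : (pairZeroEquiv l).permCongr σ none = some none := by
    simp [permCongr_apply, ← hl]
  obtain ⟨τ, hτ⟩ := exists_pairNone_eq
    ((isPerfectMatching_permCongr_iff _ σ).mpr hσ) h0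
  exact ⟨l, τ, by rw [pairZero, hτ, ← permCongr_symm, symm_apply_apply]⟩

lemma prod_filter_lt_pairZero {R : Type*} [CommMonoid R] (F : Fin (m + 2) → Fin (m + 2) → R) :
    ∏ i ∈ univ.filter (fun i => i < pairZero l τ i), F i (pairZero l τ i) =
      F 0 l.succ * ∏ k ∈ univ.filter (fun k => k < τ k),
        F (l.succAbove k).succ (l.succAbove (τ k)).succ := by
  simp only [prod_filter]
  rw [← (pairZeroEquiv l).symm.prod_comp, Fintype.prod_option, Fintype.prod_option]
  simp [succ_pos, succ_lt_succ_iff, succAbove_lt_succAbove_iff]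

end Equiv.Perm

open Equiv Perm

section Hafnian

variable {R : Type*} [CommSemiring R]

def hafnian {n : ℕ} (F : Fin n → Fin n → R) : R :=
  ∑ σ ∈ univ.filter (fun σ : Perm (Fin n) => σ.IsPerfectMatching),
    ∏ i ∈ univ.filter (fun i => i < σ i), F i (σ i)

lemma hafnian_zero (F : Fin 0 → Fin 0 → R) : hafnian F = 1 := by
  simp [hafnian, IsPerfectMatching]

lemma hafnian_one (F : Fin 1 → Fin 1 → R) : hafnian F = 0 := by
  simp [hafnian, IsPerfectMatching, Subsingleton.elim _ (0 : Fin 1)]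

lemma hafnian_cast {m n : ℕ} (h : m = n) (F : Fin n → Fin n → R) :
    hafnian (fun i j : Fin m => F (Fin.cast h i) (Fin.cast h j)) = hafnian F := by
  subst h
  rfl

theorem hafnian_succ_succ {m : ℕ} (F : Fin (m + 2) → Fin (m + 2) → R) :
    hafnian F = ∑ l : Fin (m + 1),
      F 0 l.succ * hafnian (fun i j => F (l.succAbove i).succ (l.succAbove j).succ) := by
  simp only [hafnian, mul_sum]
  rw [← sum_product']
  symm
  refine sum_bij (fun p _ => pairZero p.1 p.2) ?_ ?_ ?_ ?_
  · intro p hp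
    simpa [isPerfectMatching_pairZero_iff] using hp
  · intro p _ q _ h
    exact Prod.ext_iff.mpr ((pairZero_inj p.1 p.2).mp h)
  · intro σ hσ
    obtain ⟨l, τ, rfl⟩ := exists_pairZero_eq (mem_filter.mp hσ).2
    exact ⟨(l, τ), by simpa [isPerfectMatching_pairZero_iff] using hσ, rfl⟩
  · intro p _
    rw [prod_filter_lt_pairZero]

theorem hafnian_eq_zero_of_odd : ∀ {n : ℕ} (F : Fin n → Fin n → R), Odd n → hafnian F = 0
  | 0, _, h => absurd h (by decide)
  | 1, F, _ => hafnian_one F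
  | m + 2, F, h => by
    rw [hafnian_succ_succ]
    refine sum_eq_zero fun l _ => ?_
    rw [hafnian_eq_zero_of_odd _ (by simpa [parity_simps] using h), mul_zero]

end Hafnian

lemma List.getElem_eraseIdx_succAbove {α : Type*} {L : List α} {n : ℕ} (hL : L.length = n + 1)
    (l : Fin (n + 1)) (k : Fin n) :
    (L.eraseIdx l)[(k : ℕ)]'(by simp [List.length_eraseIdx, hL, Nat.lt_succ_iff.mp l.isLt]) =
      L[(l.succAbove k : ℕ)]'(hL.symm ▸ (l.succAbove k).isLt) := by
  rw [List.getElem_eraseIdx]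
  unfold Fin.succAbove
  split_ifs with h h' h' <;> simp_all [Fin.lt_def]

lemma wick_eq_hafnian (K : ℕ → ℕ → ℂ) (v : List ℕ) :
    wick K v = hafnian (fun i j => K (v.get i) (v.get j)) := by
  induction v using wick.induct with
  | case1 => rw [wick.eq_1, hafnian_zero]
  | case2 a => rw [wick.eq_2, hafnian_one]
  | case3 a rest hrest ih =>
    obtain ⟨b, t, rfl⟩ := List.exists_cons_of_ne_nil hrest
    have hlen (l : Fin (t.length + 1)) : t.length = ((b :: t).eraseIdx l).length := by
      simp [List.length_eraseIdx, Nat.lt_succ_iff.mp l.isLt]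
    rw [wick.eq_3 K a _ hrest, hafnian_succ_succ]
    refine sum_congr rfl fun l _ => ?_
    rw [ih, ← hafnian_cast (hlen l)]
    simp [List.getElem_eraseIdx_succAbove]

theorem wick_theorem_general (K : ℕ → ℕ → ℂ) (v : List ℕ) :
    (Odd v.length → wick K v = 0) ∧
    (Even v.length → wick K v =
      ∑ σ ∈ Finset.univ.filter
          (fun σ : Equiv.Perm (Fin v.length) => ∀ i, σ i ≠ i ∧ σ (σ i) = i),
        ∏ i ∈ Finset.univ.filter (fun i => i < σ i), K (v.get i) (v.get (σ i))) :=
  ⟨fun hodd => (wick_eq_hafnian K v).trans (hafnian_eq_zero_of_odd _ hodd),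
    -- the two sums differ only in the decidability instances of their filters
    fun _ => (wick_eq_hafnian K v).trans (by unfold hafnian IsPerfectMatching; congr)⟩

/-- Wick's theorem for bosonic n-point functions: for a symmetric kernel K the recursion
yields 0 in odd length, and in even length the hafnian: the sum over all perfect
matchings (encoded as fixed-point-free involutions σ) of `Π_{i < σ i} K(i_a, i_{σ a})`. -/
theorem wick_theorem (K : ℕ → ℕ → ℂ) (hK : ∀ a b, K a b = K b a) (v : List ℕ) :
    (Odd v.length → wick K v = 0) ∧
    (Even v.length → wick K v =
      ∑ σ ∈ Finset.univ.filter
          (fun σ : Equiv.Perm (Fin v.length) => ∀ i, σ i ≠ i ∧ σ (σ i) = i),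
        ∏ i ∈ Finset.univ.filter (fun i => i < σ i), K (v.get i) (v.get (σ i))) :=
  wick_theorem_general K v
end
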